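/- arXiv:2605.03606 — 3 statements merged into one kernel-verified Lean document; each statement's English description precedes it below -/
import Mathlib

section
/- Let Y : ℝ × ℝ → ℝ be C². Define d : ℝ × ℝ → ℝ by d(x₁, x₂) = Y₁(x₁, x₂)·Y₁(x₂, x₁) − Y₂(x₁, x₂)·Y₂(x₂, x₁), where Y₁, Y₂ denote the partial derivatives of Y in its first and second arguments. If at a symmetric point x* ∈ ℝ the fold condition Y₁(x*, x*) = Y₂(x*, x*) holds, then the gradient of d at (x*, x*) equals Y₁(x*, x*)·(Y₁₁(x*, x*) − Y₂₂(x*, x*))·(1, 1)ᵀ, where Y₁₁, Y₂₂ denote the pure second partial derivatives of Y. In particular, this gradient is orthogonal to the antisymmetric vector (1, −1)ᵀ, so the fold curve {d = 0} is tangent to the antisymmetric direction at the symmetric fold point. -/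
/-- The gradient of the Jacobian determinant
`d(x₁,x₂) = Y₁(x₁,x₂)·Y₁(x₂,x₁) − Y₂(x₁,x₂)·Y₂(x₂,x₁)` at a symmetric fold point
`(x*,x*)` equals `Y₁(x*,x*)·(Y₁₁(x*,x*) − Y₂₂(x*,x*))·(1,1)ᵀ`, hence is orthogonal
to the antisymmetric direction `(1,-1)ᵀ`. -/
theorem stmt_2 (Y : ℝ × ℝ → ℝ) (hY : ContDiff ℝ 2 Y)
    (d : ℝ × ℝ → ℝ)
    (hd : ∀ x₁ x₂ : ℝ, d (x₁, x₂) =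
      deriv (fun t => Y (t, x₂)) x₁ * deriv (fun t => Y (t, x₁)) x₂
        - deriv (fun t => Y (x₁, t)) x₂ * deriv (fun t => Y (x₂, t)) x₁)
    (xs : ℝ)
    (hfold : deriv (fun t => Y (t, xs)) xs = deriv (fun t => Y (xs, t)) xs) :
    deriv (fun t => d (t, xs)) xs =
      deriv (fun t => Y (t, xs)) xs *
        (iteratedDeriv 2 (fun t => Y (t, xs)) xs - iteratedDeriv 2 (fun t => Y (xs, t)) xs) ∧
    deriv (fun t => d (xs, t)) xs =
      deriv (fun t => Y (t, xs)) xs *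
        (iteratedDeriv 2 (fun t => Y (t, xs)) xs - iteratedDeriv 2 (fun t => Y (xs, t)) xs) ∧
    deriv (fun t => d (t, xs)) xs * 1 + deriv (fun t => d (xs, t)) xs * (-1) = 0 := by
  have hYd : Differentiable ℝ Y := hY.differentiable two_ne_zero
  set g := fderiv ℝ Y with hg
  have hgc : ContDiff ℝ 1 g := hY.fderiv_right (le_refl 2)
  have hgd : Differentiable ℝ g := hgc.differentiable one_ne_zero
  set H := fderiv ℝ g (xs, xs) with hH
  -- first partial derivatives
  have hA : ∀ x₁ x₂ : ℝ, HasDerivAt (fun t => Y (t, x₂)) (g (x₁, x₂) (1, 0)) x₁ := by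
    intro x₁ x₂
    have h1 : HasDerivAt (fun t : ℝ => (t, x₂)) ((1 : ℝ), (0 : ℝ)) x₁ :=
      HasDerivAt.prodMk (hasDerivAt_id x₁) (hasDerivAt_const x₁ x₂)
    exact (hYd (x₁, x₂)).hasFDerivAt.comp_hasDerivAt x₁ h1
  have hB : ∀ x₁ x₂ : ℝ, HasDerivAt (fun t => Y (x₁, t)) (g (x₁, x₂) (0, 1)) x₂ := by
    intro x₁ x₂
    have h1 : HasDerivAt (fun t : ℝ => (x₁, t)) ((0 : ℝ), (1 : ℝ)) x₂ :=
      HasDerivAt.prodMk (hasDerivAt_const x₂ x₁) (hasDerivAt_id x₂)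
    exact (hYd (x₁, x₂)).hasFDerivAt.comp_hasDerivAt x₂ h1
  have hP1 : ∀ x₁ x₂ : ℝ, deriv (fun t => Y (t, x₂)) x₁ = g (x₁, x₂) (1, 0) :=
    fun x₁ x₂ => (hA x₁ x₂).deriv
  have hP2 : ∀ x₁ x₂ : ℝ, deriv (fun t => Y (x₁, t)) x₂ = g (x₁, x₂) (0, 1) :=
    fun x₁ x₂ => (hB x₁ x₂).deriv
  -- second derivatives
  have hD1 : ∀ w : ℝ × ℝ, HasDerivAt (fun t => g (t, xs) w) (H (1, 0) w) xs := by
    intro w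
    have h1 : HasDerivAt (fun t : ℝ => (t, xs)) ((1 : ℝ), (0 : ℝ)) xs :=
      HasDerivAt.prodMk (hasDerivAt_id xs) (hasDerivAt_const xs xs)
    have h2 : HasDerivAt (fun t : ℝ => g (t, xs)) (H (1, 0)) xs := by
      have h3 := (hgd (xs, xs)).hasFDerivAt.comp_hasDerivAt_of_eq xs h1 rfl
      exact h3
    simpa using h2.clm_apply (hasDerivAt_const xs w)
  have hD2 : ∀ w : ℝ × ℝ, HasDerivAt (fun t => g (xs, t) w) (H (0, 1) w) xs := by
    intro w
    have h1 : HasDerivAt (fun t : ℝ => (xs, t)) ((0 : ℝ), (1 : ℝ)) xs :=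
      HasDerivAt.prodMk (hasDerivAt_const xs xs) (hasDerivAt_id xs)
    have h2 : HasDerivAt (fun t : ℝ => g (xs, t)) (H (0, 1)) xs := by
      have h3 := (hgd (xs, xs)).hasFDerivAt.comp_hasDerivAt_of_eq xs h1 rfl
      exact h3
    simpa using h2.clm_apply (hasDerivAt_const xs w)
  have hsymm : H (0, 1) (1, 0) = H (1, 0) (0, 1) :=
    second_derivative_symmetric (fun y => (hYd y).hasFDerivAt)
      ((hgd (xs, xs)).hasFDerivAt) _ _
  -- iterated derivatives
  have hit1 : iteratedDeriv 2 (fun t => Y (t, xs)) xs = H (1, 0) (1, 0) := by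
    rw [show (2 : ℕ) = 1 + 1 from rfl, iteratedDeriv_succ, iteratedDeriv_one]
    have h : deriv (fun t => Y (t, xs)) = fun t => g (t, xs) (1, 0) :=
      funext fun t => hP1 t xs
    rw [h]
    exact (hD1 (1, 0)).deriv
  have hit2 : iteratedDeriv 2 (fun t => Y (xs, t)) xs = H (0, 1) (0, 1) := by
    rw [show (2 : ℕ) = 1 + 1 from rfl, iteratedDeriv_succ, iteratedDeriv_one]
    have h : deriv (fun t => Y (xs, t)) = fun t => g (xs, t) (0, 1) :=
      funext fun t => hP2 xs t
    rw [h]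
    exact (hD2 (0, 1)).deriv
  -- fold condition
  have hfold' : g (xs, xs) (1, 0) = g (xs, xs) (0, 1) := by
    rw [← hP1 xs xs, ← hP2 xs xs]; exact hfold
  -- derivative of d in the first direction
  have hf1 : (fun t => d (t, xs)) =
      fun t => g (t, xs) (1, 0) * g (xs, t) (1, 0) - g (t, xs) (0, 1) * g (xs, t) (0, 1) := by
    funext t
    rw [hd t xs, hP1 t xs, hP1 xs t, hP2 t xs, hP2 xs t]
  have hf2 : (fun t => d (xs, t)) =
      fun t => g (xs, t) (1, 0) * g (t, xs) (1, 0) - g (xs, t) (0, 1) * g (t, xs) (0, 1) := by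
    funext t
    rw [hd xs t, hP1 xs t, hP1 t xs, hP2 xs t, hP2 t xs]
  have hdd1 : HasDerivAt (fun t => d (t, xs))
      (H (1, 0) (1, 0) * g (xs, xs) (1, 0) + g (xs, xs) (1, 0) * H (0, 1) (1, 0)
        - (H (1, 0) (0, 1) * g (xs, xs) (0, 1) + g (xs, xs) (0, 1) * H (0, 1) (0, 1))) xs := by
    rw [hf1]
    exact ((hD1 (1, 0)).mul (hD2 (1, 0))).sub ((hD1 (0, 1)).mul (hD2 (0, 1)))
  have hdd2 : HasDerivAt (fun t => d (xs, t))
      (H (0, 1) (1, 0) * g (xs, xs) (1, 0) + g (xs, xs) (1, 0) * H (1, 0) (1, 0)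
        - (H (0, 1) (0, 1) * g (xs, xs) (0, 1) + g (xs, xs) (0, 1) * H (1, 0) (0, 1))) xs := by
    rw [hf2]
    exact ((hD2 (1, 0)).mul (hD1 (1, 0))).sub ((hD2 (0, 1)).mul (hD1 (0, 1)))
  have e1 : deriv (fun t => d (t, xs)) xs =
      deriv (fun t => Y (t, xs)) xs *
        (iteratedDeriv 2 (fun t => Y (t, xs)) xs - iteratedDeriv 2 (fun t => Y (xs, t)) xs) := by
    rw [hdd1.deriv, hP1 xs xs, hit1, hit2, hsymm, ← hfold']
    ring
  have e2 : deriv (fun t => d (xs, t)) xs =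
      deriv (fun t => Y (t, xs)) xs *
        (iteratedDeriv 2 (fun t => Y (t, xs)) xs - iteratedDeriv 2 (fun t => Y (xs, t)) xs) := by
    rw [hdd2.deriv, hP1 xs xs, hit1, hit2, hsymm, ← hfold']
    ring
  exact ⟨e1, e2, by rw [e1, e2]; ring⟩
end

section
/- Let b, c, p, q, ε ∈ ℝ with c·p < 0 and ε > 0, and suppose either q = 0, or q ≠ 0 and ε < −c·p/q². Let J_a = [[−ε·q, c], [ε·p, ε·q]] (the antisymmetric block at the parameter value where its trace vanishes, i.e., where f₁ − f₂ = −ε·g_y). Then tr(J_a) = 0, det(J_a) = −ε·c·p − ε²·q² > 0, and the complex eigenvalues of J_a are exactly ±i·√(det J_a); in particular they are purely imaginary and nonzero, with modulus √(ε·|c·p| − ε²·q²). Hence a Hopf bifurcation occurs in the antisymmetric block, with eigenvalue modulus of order √ε as ε → 0⁺. -/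
/-- The antisymmetric block `J_a = [[−εq, c], [εp, εq]]` at the
trace-zero (singular Hopf) parameter value: `tr J_a = 0`,
`det J_a = −εcp − ε²q² > 0`, the complex eigenvalues are exactly
`± i·√(det J_a)` — purely imaginary, nonzero, of modulus `√(ε|cp| − ε²q²)`. -/
theorem stmt_8 (c p q ε : ℝ) (hcp : c * p < 0) (hε : 0 < ε)
    (hq : q = 0 ∨ (q ≠ 0 ∧ ε < -(c * p) / q ^ 2))
    (Ja : Matrix (Fin 2) (Fin 2) ℝ)
    (hJa : Ja = !![-(ε * q), c; ε * p, ε * q]) :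
    Ja.trace = 0 ∧
    Ja.det = -(ε * c * p) - ε ^ 2 * q ^ 2 ∧
    0 < Ja.det ∧
    (∀ z : ℂ, z ^ 2 - (Ja.trace : ℂ) * z + (Ja.det : ℂ) = 0 ↔
      (z = Complex.I * (Real.sqrt Ja.det : ℂ) ∨
       z = -(Complex.I * (Real.sqrt Ja.det : ℂ)))) ∧
    (∀ z : ℂ, z ^ 2 - (Ja.trace : ℂ) * z + (Ja.det : ℂ) = 0 →
      z.re = 0 ∧ z ≠ 0 ∧
      ‖z‖ = Real.sqrt (ε * |c * p| - ε ^ 2 * q ^ 2)) := by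
  have htr : Ja.trace = 0 := by
    subst hJa; simp [Matrix.trace_fin_two]
  have hdet : Ja.det = -(ε * c * p) - ε ^ 2 * q ^ 2 := by
    subst hJa; simp [Matrix.det_fin_two]; ring
  have hpos : 0 < Ja.det := by
    rw [hdet]
    rcases hq with h | ⟨hq0, hlt⟩
    · simp [h]; nlinarith
    · have hq2 : 0 < q ^ 2 := by positivity
      have := (lt_div_iff₀ hq2).mp hlt
      nlinarith
  have hargeq : ε * |c * p| - ε ^ 2 * q ^ 2 = Ja.det := by
    rw [hdet, abs_of_neg hcp]; ring
  have hs : Real.sqrt Ja.det ≠ 0 := by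
    positivity
  have hsq : ((Real.sqrt Ja.det : ℝ) : ℂ) ^ 2 = (Ja.det : ℂ) := by
    rw [← Complex.ofReal_pow, Real.sq_sqrt hpos.le]
  have key : ∀ z : ℂ, z ^ 2 - (Ja.trace : ℂ) * z + (Ja.det : ℂ) = 0 ↔
      (z = Complex.I * (Real.sqrt Ja.det : ℂ) ∨
       z = -(Complex.I * (Real.sqrt Ja.det : ℂ))) := by
    intro z
    rw [htr]
    constructor
    · intro h
      have : (z - Complex.I * (Real.sqrt Ja.det : ℂ)) *
          (z + Complex.I * (Real.sqrt Ja.det : ℂ)) = 0 := by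
        have : z ^ 2 + (Ja.det : ℂ) = 0 := by
          have := h; push_cast at this ⊢; linear_combination this
        linear_combination this + hsq - ((Real.sqrt Ja.det : ℝ) : ℂ) ^ 2 * Complex.I_sq
      rcases mul_eq_zero.mp this with h | h
      · left; exact sub_eq_zero.mp h
      · right; linear_combination h
    · rintro (rfl | rfl) <;>
      · push_cast
        linear_combination ((Real.sqrt Ja.det : ℝ) : ℂ) ^ 2 * Complex.I_sq - hsq
  refine ⟨htr, hdet, hpos, key, ?_⟩
  intro z hz
  have hz' := (key z).mp hz
  have habs : ‖z‖ = Real.sqrt Ja.det := by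
    rcases hz' with rfl | rfl <;>
      simp [map_mul, Complex.norm_real, Real.norm_eq_abs, abs_of_nonneg (Real.sqrt_nonneg _)]
  refine ⟨?_, ?_, by rw [hargeq, habs]⟩
  · rcases hz' with rfl | rfl <;> simp
  · rcases hz' with rfl | rfl <;> simp [Complex.I_ne_zero, Complex.ofReal_eq_zero, hs]
end

section
/- Let f : ℝ × ℝ × ℝ → ℝ be C² and Y : ℝ × ℝ → ℝ be C² with f(x₁, x₂, Y(x₁, x₂)) = 0 for all (x₁, x₂). Fix x* ∈ ℝ, set y* = Y(x*, x*), and suppose f_y := ∂f/∂y (x*, x*, y*) ≠ 0 and that the symmetric fold condition f₁ = f₂ holds at (x*, x*, y*), where f₁, f₂ are the first partial derivatives of f in its first two arguments. Then Y₁₁(x*, x*) − Y₂₂(x*, x*) = −D*/f_y, where Y₁₁, Y₂₂ are the pure second partial derivatives of Y and D* := f₁₁ − f₂₂ − 2·(f₁/f_y)·(f₁_y − f₂_y), with f₁₁, f₂₂ the pure second partials of f in its first two arguments and f₁_y, f₂_y the mixed second partials with the third argument, all evaluated at (x*, x*, y*). In particular, the non-degeneracy condition Y₁₁(x*, x*)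 ≠ Y₂₂(x*, x*) is equivalent to D* ≠ 0. -/
set_option maxHeartbeats 1600000


/-- At a symmetric fold point (`f₁ = f₂`, `f_y ≠ 0`) of the
critical manifold `f(x₁, x₂, Y(x₁, x₂)) = 0`, the geometric non-degeneracy
quantity satisfies `Y₁₁(x*,x*) − Y₂₂(x*,x*) = −D*/f_y`, where
`D* = f₁₁ − f₂₂ − 2·(f₁/f_y)·(f₁_y − f₂_y)`; in particular
`Y₁₁(x*,x*) ≠ Y₂₂(x*,x*)` iff `D* ≠ 0`. -/
theorem stmt_18 (f : ℝ × ℝ × ℝ → ℝ) (Y : ℝ × ℝ → ℝ)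
    (hf : ContDiff ℝ 2 f) (hY : ContDiff ℝ 2 Y)
    (hzero : ∀ x₁ x₂ : ℝ, f (x₁, x₂, Y (x₁, x₂)) = 0)
    (xs ys : ℝ) (hys : ys = Y (xs, xs))
    (f₁ f₂ fy f₁₁ f₂₂ f₁y f₂y Dstar : ℝ)
    (hf₁ : f₁ = deriv (fun t => f (t, xs, ys)) xs)
    (hf₂ : f₂ = deriv (fun t => f (xs, t, ys)) xs)
    (hfy : fy = deriv (fun t => f (xs, xs, t)) ys)
    (hfy0 : fy ≠ 0)
    (hfold : f₁ = f₂)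
    (hf₁₁ : f₁₁ = iteratedDeriv 2 (fun t => f (t, xs, ys)) xs)
    (hf₂₂ : f₂₂ = iteratedDeriv 2 (fun t => f (xs, t, ys)) xs)
    (hf₁y : f₁y = deriv (fun t => deriv (fun m => f (t, xs, m)) ys) xs)
    (hf₂y : f₂y = deriv (fun t => deriv (fun m => f (xs, t, m)) ys) xs)
    (hD : Dstar = f₁₁ - f₂₂ - 2 * (f₁ / fy) * (f₁y - f₂y)) :
    iteratedDeriv 2 (fun t => Y (t, xs)) xs - iteratedDeriv 2 (fun t => Y (xs, t)) xs =
      -Dstar / fy ∧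
    (iteratedDeriv 2 (fun t => Y (t, xs)) xs ≠ iteratedDeriv 2 (fun t => Y (xs, t)) xs ↔
      Dstar ≠ 0) := by
  subst hys
  -- basic differentiability facts
  have hf' : ∀ p : ℝ × ℝ × ℝ, HasFDerivAt f (fderiv ℝ f p) p := fun p =>
    (hf.differentiable (by norm_num) p).hasFDerivAt
  have hY' : ∀ q : ℝ × ℝ, HasFDerivAt Y (fderiv ℝ Y q) q := fun q =>
    (hY.differentiable (by norm_num) q).hasFDerivAt
  have hFc : ContDiff ℝ 1 (fderiv ℝ f) := hf.fderiv_right (by norm_num)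
  have hGc : ContDiff ℝ 1 (fderiv ℝ Y) := hY.fderiv_right (by norm_num)
  set H : (ℝ × ℝ × ℝ) →L[ℝ] (ℝ × ℝ × ℝ) →L[ℝ] ℝ :=
    fderiv ℝ (fderiv ℝ f) (xs, xs, Y (xs, xs)) with hHdef
  have hH : HasFDerivAt (fderiv ℝ f) H (xs, xs, Y (xs, xs)) :=
    (hFc.differentiable one_ne_zero (xs, xs, Y (xs, xs))).hasFDerivAt
  set K : (ℝ × ℝ) →L[ℝ] (ℝ × ℝ) →L[ℝ] ℝ := fderiv ℝ (fderiv ℝ Y) (xs, xs) with hKdef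
  have hK : HasFDerivAt (fderiv ℝ Y) K (xs, xs) := (hGc.differentiable one_ne_zero (xs, xs)).hasFDerivAt
  have hsymm : ∀ v w, H v w = H w v := fun v w => second_derivative_symmetric hf' hH v w
  clear_value H K
  -- one-variable partial derivatives of f
  have hx1 : ∀ a b c : ℝ, HasDerivAt (fun t => f (t, b, c)) (fderiv ℝ f (a, b, c) (1, 0, 0)) a := by
    intro a b c
    have hcv : HasDerivAt (fun t : ℝ => (t, b, c)) ((1 : ℝ), (0 : ℝ), (0 : ℝ)) a :=
      HasDerivAt.prodMk (hasDerivAt_id a) (HasDerivAt.prodMk (hasDerivAt_const a b) (hasDerivAt_const a c))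
    exact HasFDerivAt.comp_hasDerivAt (f := fun t : ℝ => (t, b, c)) a (hf' (a, b, c)) hcv
  have hx2 : ∀ a b c : ℝ, HasDerivAt (fun t => f (b, t, c)) (fderiv ℝ f (b, a, c) (0, 1, 0)) a := by
    intro a b c
    have hcv : HasDerivAt (fun t : ℝ => (b, t, c)) ((0 : ℝ), (1 : ℝ), (0 : ℝ)) a :=
      HasDerivAt.prodMk (hasDerivAt_const a b) (HasDerivAt.prodMk (hasDerivAt_id a) (hasDerivAt_const a c))
    exact HasFDerivAt.comp_hasDerivAt (f := fun t : ℝ => (b, t, c)) a (hf' (b, a, c)) hcv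
  have hx3 : ∀ a b c : ℝ, HasDerivAt (fun t => f (b, c, t)) (fderiv ℝ f (b, c, a) (0, 0, 1)) a := by
    intro a b c
    have hcv : HasDerivAt (fun t : ℝ => (b, c, t)) ((0 : ℝ), (0 : ℝ), (1 : ℝ)) a :=
      HasDerivAt.prodMk (hasDerivAt_const a b) (HasDerivAt.prodMk (hasDerivAt_const a c) (hasDerivAt_id a))
    exact HasFDerivAt.comp_hasDerivAt (f := fun t : ℝ => (b, c, t)) a (hf' (b, c, a)) hcv
  -- first partials at the base point
  have ef₁ : f₁ = fderiv ℝ f (xs, xs, Y (xs, xs)) (1, 0, 0) := by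
    rw [hf₁, (hx1 xs xs (Y (xs, xs))).deriv]
  have ef₂ : f₂ = fderiv ℝ f (xs, xs, Y (xs, xs)) (0, 1, 0) := by
    rw [hf₂, (hx2 xs xs (Y (xs, xs))).deriv]
  have efy : fy = fderiv ℝ f (xs, xs, Y (xs, xs)) (0, 0, 1) := by
    rw [hfy, (hx3 (Y (xs, xs)) xs xs).deriv]
  -- curves of first-derivative maps
  have curveH : HasDerivAt (fun a => fderiv ℝ f (a, xs, Y (xs, xs))) (H (1, 0, 0)) xs := by
    have hcv : HasDerivAt (fun t : ℝ => (t, xs, Y (xs, xs))) ((1 : ℝ), (0 : ℝ), (0 : ℝ)) xs :=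
      HasDerivAt.prodMk (hasDerivAt_id xs) (HasDerivAt.prodMk (hasDerivAt_const xs xs) (hasDerivAt_const xs (Y (xs, xs))))
    exact HasFDerivAt.comp_hasDerivAt (f := fun t : ℝ => (t, xs, Y (xs, xs))) xs hH hcv
  have curveH2 : HasDerivAt (fun a => fderiv ℝ f (xs, a, Y (xs, xs))) (H (0, 1, 0)) xs := by
    have hcv : HasDerivAt (fun t : ℝ => (xs, t, Y (xs, xs))) ((0 : ℝ), (1 : ℝ), (0 : ℝ)) xs :=
      HasDerivAt.prodMk (hasDerivAt_const xs xs) (HasDerivAt.prodMk (hasDerivAt_id xs) (hasDerivAt_const xs (Y (xs, xs))))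
    exact HasFDerivAt.comp_hasDerivAt (f := fun t : ℝ => (xs, t, Y (xs, xs))) xs hH hcv
  -- second partials of f in terms of H
  have ef₁₁ : f₁₁ = H (1, 0, 0) (1, 0, 0) := by
    rw [hf₁₁, iteratedDeriv_succ, iteratedDeriv_one]
    have hd : deriv (fun t => f (t, xs, Y (xs, xs))) =
        fun a => fderiv ℝ f (a, xs, Y (xs, xs)) (1, 0, 0) :=
      funext fun a => (hx1 a xs (Y (xs, xs))).deriv
    rw [hd]
    have := (curveH.clm_apply (hasDerivAt_const xs ((1 : ℝ), (0 : ℝ), (0 : ℝ)))).deriv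
    simpa using this
  have ef₂₂ : f₂₂ = H (0, 1, 0) (0, 1, 0) := by
    rw [hf₂₂, iteratedDeriv_succ, iteratedDeriv_one]
    have hd : deriv (fun t => f (xs, t, Y (xs, xs))) =
        fun a => fderiv ℝ f (xs, a, Y (xs, xs)) (0, 1, 0) :=
      funext fun a => (hx2 a xs (Y (xs, xs))).deriv
    rw [hd]
    have := (curveH2.clm_apply (hasDerivAt_const xs ((0 : ℝ), (1 : ℝ), (0 : ℝ)))).deriv
    simpa using this
  have ef₁y : f₁y = H (1, 0, 0) (0, 0, 1) := by
    rw [hf₁y]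
    have hd : (fun t => deriv (fun m => f (t, xs, m)) (Y (xs, xs))) =
        fun a => fderiv ℝ f (a, xs, Y (xs, xs)) (0, 0, 1) :=
      funext fun a => (hx3 (Y (xs, xs)) a xs).deriv
    rw [hd]
    have := (curveH.clm_apply (hasDerivAt_const xs ((0 : ℝ), (0 : ℝ), (1 : ℝ)))).deriv
    simpa using this
  have ef₂y : f₂y = H (0, 1, 0) (0, 0, 1) := by
    rw [hf₂y]
    have hd : (fun t => deriv (fun m => f (xs, t, m)) (Y (xs, xs))) =
        fun a => fderiv ℝ f (xs, a, Y (xs, xs)) (0, 0, 1) :=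
      funext fun a => (hx3 (Y (xs, xs)) xs a).deriv
    rw [hd]
    have := (curveH2.clm_apply (hasDerivAt_const xs ((0 : ℝ), (0 : ℝ), (1 : ℝ)))).deriv
    simpa using this
  -- derivatives of Y along each axis
  have hu : ∀ t : ℝ, HasDerivAt (fun s => Y (s, xs)) (fderiv ℝ Y (t, xs) (1, 0)) t := by
    intro t
    have hcv : HasDerivAt (fun s : ℝ => (s, xs)) ((1 : ℝ), (0 : ℝ)) t :=
      HasDerivAt.prodMk (hasDerivAt_id t) (hasDerivAt_const t xs)
    exact HasFDerivAt.comp_hasDerivAt (f := fun s : ℝ => (s, xs)) t (hY' (t, xs)) hcv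
  have hv : ∀ t : ℝ, HasDerivAt (fun s => Y (xs, s)) (fderiv ℝ Y (xs, t) (0, 1)) t := by
    intro t
    have hcv : HasDerivAt (fun s : ℝ => (xs, s)) ((0 : ℝ), (1 : ℝ)) t :=
      HasDerivAt.prodMk (hasDerivAt_const t xs) (hasDerivAt_id t)
    exact HasFDerivAt.comp_hasDerivAt (f := fun s : ℝ => (xs, s)) t (hY' (xs, t)) hcv
  have curveK1 : HasDerivAt (fun t => fderiv ℝ Y (t, xs)) (K (1, 0)) xs := by
    have hcv : HasDerivAt (fun s : ℝ => (s, xs)) ((1 : ℝ), (0 : ℝ)) xs :=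
      HasDerivAt.prodMk (hasDerivAt_id xs) (hasDerivAt_const xs xs)
    exact HasFDerivAt.comp_hasDerivAt (f := fun s : ℝ => (s, xs)) xs hK hcv
  have curveK2 : HasDerivAt (fun t => fderiv ℝ Y (xs, t)) (K (0, 1)) xs := by
    have hcv : HasDerivAt (fun s : ℝ => (xs, s)) ((0 : ℝ), (1 : ℝ)) xs :=
      HasDerivAt.prodMk (hasDerivAt_const xs xs) (hasDerivAt_id xs)
    exact HasFDerivAt.comp_hasDerivAt (f := fun s : ℝ => (xs, s)) xs hK hcv
  have hu' : HasDerivAt (fun t => fderiv ℝ Y (t, xs) (1, 0)) (K (1, 0) (1, 0)) xs := by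
    have := curveK1.clm_apply (hasDerivAt_const xs ((1 : ℝ), (0 : ℝ)))
    simpa using this
  have hv' : HasDerivAt (fun t => fderiv ℝ Y (xs, t) (0, 1)) (K (0, 1) (0, 1)) xs := by
    have := curveK2.clm_apply (hasDerivAt_const xs ((0 : ℝ), (1 : ℝ)))
    simpa using this
  have eY11 : iteratedDeriv 2 (fun t => Y (t, xs)) xs = K (1, 0) (1, 0) := by
    rw [iteratedDeriv_succ, iteratedDeriv_one]
    have hd : deriv (fun s => Y (s, xs)) = fun t => fderiv ℝ Y (t, xs) (1, 0) :=
      funext fun t => (hu t).deriv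
    rw [hd]; exact hu'.deriv
  have eY22 : iteratedDeriv 2 (fun t => Y (xs, t)) xs = K (0, 1) (0, 1) := by
    rw [iteratedDeriv_succ, iteratedDeriv_one]
    have hd : deriv (fun s => Y (xs, s)) = fun t => fderiv ℝ Y (xs, t) (0, 1) :=
      funext fun t => (hv t).deriv
    rw [hd]; exact hv'.deriv
  -- first-order identities along the two axes
  have hmain1 : ∀ t : ℝ, fderiv ℝ f (t, xs, Y (t, xs)) (1, 0, fderiv ℝ Y (t, xs) (1, 0)) = 0 := by
    intro t
    have hφ : HasDerivAt (fun s => f (s, xs, Y (s, xs)))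
        (fderiv ℝ f (t, xs, Y (t, xs)) (1, 0, fderiv ℝ Y (t, xs) (1, 0))) t := by
      have hcv : HasDerivAt (fun s : ℝ => (s, xs, Y (s, xs)))
          ((1 : ℝ), (0 : ℝ), fderiv ℝ Y (t, xs) (1, 0)) t :=
        HasDerivAt.prodMk (hasDerivAt_id t) (HasDerivAt.prodMk (hasDerivAt_const t xs) (hu t))
      exact HasFDerivAt.comp_hasDerivAt (f := fun s : ℝ => (s, xs, Y (s, xs))) t (hf' (t, xs, Y (t, xs))) hcv
    have hz : (fun s => f (s, xs, Y (s, xs))) = fun _ => (0 : ℝ) :=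
      funext fun s => hzero s xs
    rw [hz] at hφ
    simpa using hφ.deriv.symm
  have hmain2 : ∀ t : ℝ, fderiv ℝ f (xs, t, Y (xs, t)) (0, 1, fderiv ℝ Y (xs, t) (0, 1)) = 0 := by
    intro t
    have hφ : HasDerivAt (fun s => f (xs, s, Y (xs, s)))
        (fderiv ℝ f (xs, t, Y (xs, t)) (0, 1, fderiv ℝ Y (xs, t) (0, 1))) t := by
      have hcv : HasDerivAt (fun s : ℝ => (xs, s, Y (xs, s)))
          ((0 : ℝ), (1 : ℝ), fderiv ℝ Y (xs, t) (0, 1)) t :=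
        HasDerivAt.prodMk (hasDerivAt_const t xs) (HasDerivAt.prodMk (hasDerivAt_id t) (hv t))
      exact HasFDerivAt.comp_hasDerivAt (f := fun s : ℝ => (xs, s, Y (xs, s))) t (hf' (xs, t, Y (xs, t))) hcv
    have hz : (fun s => f (xs, s, Y (xs, s))) = fun _ => (0 : ℝ) :=
      funext fun s => hzero xs s
    rw [hz] at hφ
    simpa using hφ.deriv.symm
  -- second-order identities
  have E3 : H (1, 0, fderiv ℝ Y (xs, xs) (1, 0)) (1, 0, fderiv ℝ Y (xs, xs) (1, 0)) +
      fderiv ℝ f (xs, xs, Y (xs, xs)) (0, 0, K (1, 0) (1, 0)) = 0 := by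
    have hc1 : HasDerivAt (fun t => fderiv ℝ f (t, xs, Y (t, xs)))
        (H (1, 0, fderiv ℝ Y (xs, xs) (1, 0))) xs := by
      have hcv : HasDerivAt (fun s : ℝ => (s, xs, Y (s, xs)))
          ((1 : ℝ), (0 : ℝ), fderiv ℝ Y (xs, xs) (1, 0)) xs :=
        HasDerivAt.prodMk (hasDerivAt_id xs) (HasDerivAt.prodMk (hasDerivAt_const xs xs) (hu xs))
      exact HasFDerivAt.comp_hasDerivAt (f := fun s : ℝ => (s, xs, Y (s, xs))) xs hH hcv
    have hw1 : HasDerivAt (fun t : ℝ => ((1 : ℝ), (0 : ℝ), fderiv ℝ Y (t, xs) (1, 0)))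
        ((0 : ℝ), (0 : ℝ), K (1, 0) (1, 0)) xs :=
      HasDerivAt.prodMk (hasDerivAt_const xs (1 : ℝ)) (HasDerivAt.prodMk (hasDerivAt_const xs (0 : ℝ)) hu')
    have hD1 := hc1.clm_apply hw1
    have hz : (fun t => fderiv ℝ f (t, xs, Y (t, xs)) (1, 0, fderiv ℝ Y (t, xs) (1, 0))) =
        fun _ => (0 : ℝ) := funext fun t => hmain1 t
    rw [hz] at hD1
    simpa using hD1.deriv.symm
  have E4 : H (0, 1, fderiv ℝ Y (xs, xs) (0, 1)) (0, 1, fderiv ℝ Y (xs, xs) (0, 1)) +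
      fderiv ℝ f (xs, xs, Y (xs, xs)) (0, 0, K (0, 1) (0, 1)) = 0 := by
    have hc2 : HasDerivAt (fun t => fderiv ℝ f (xs, t, Y (xs, t)))
        (H (0, 1, fderiv ℝ Y (xs, xs) (0, 1))) xs := by
      have hcv : HasDerivAt (fun s : ℝ => (xs, s, Y (xs, s)))
          ((0 : ℝ), (1 : ℝ), fderiv ℝ Y (xs, xs) (0, 1)) xs :=
        HasDerivAt.prodMk (hasDerivAt_const xs xs) (HasDerivAt.prodMk (hasDerivAt_id xs) (hv xs))
      exact HasFDerivAt.comp_hasDerivAt (f := fun s : ℝ => (xs, s, Y (xs, s))) xs hH hcv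
    have hw2 : HasDerivAt (fun t : ℝ => ((0 : ℝ), (1 : ℝ), fderiv ℝ Y (xs, t) (0, 1)))
        ((0 : ℝ), (0 : ℝ), K (0, 1) (0, 1)) xs :=
      HasDerivAt.prodMk (hasDerivAt_const xs (0 : ℝ)) (HasDerivAt.prodMk (hasDerivAt_const xs (1 : ℝ)) hv')
    have hD2 := hc2.clm_apply hw2
    have hz : (fun t => fderiv ℝ f (xs, t, Y (xs, t)) (0, 1, fderiv ℝ Y (xs, t) (0, 1))) =
        fun _ => (0 : ℝ) := funext fun t => hmain2 t
    rw [hz] at hD2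
    simpa using hD2.deriv.symm
  -- vector decompositions
  have hvec1 : ∀ c : ℝ, ((1 : ℝ), (0 : ℝ), c)
      = ((1 : ℝ), (0 : ℝ), (0 : ℝ)) + c • ((0 : ℝ), (0 : ℝ), (1 : ℝ)) := by
    intro c; simp [Prod.ext_iff]
  have hvec2 : ∀ c : ℝ, ((0 : ℝ), (1 : ℝ), c)
      = ((0 : ℝ), (1 : ℝ), (0 : ℝ)) + c • ((0 : ℝ), (0 : ℝ), (1 : ℝ)) := by
    intro c; simp [Prod.ext_iff]
  have hvec3 : ∀ c : ℝ, ((0 : ℝ), (0 : ℝ), c) = c • ((0 : ℝ), (0 : ℝ), (1 : ℝ)) := by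
    intro c; simp [Prod.ext_iff]
  -- scalar first-order equations
  have e1 : f₁ + fderiv ℝ Y (xs, xs) (1, 0) * fy = 0 := by
    have h := hmain1 xs
    rw [hvec1 (fderiv ℝ Y (xs, xs) (1, 0)), map_add, map_smul, smul_eq_mul] at h
    rw [ef₁, efy]; linarith [h]
  have e2 : f₂ + fderiv ℝ Y (xs, xs) (0, 1) * fy = 0 := by
    have h := hmain2 xs
    rw [hvec2 (fderiv ℝ Y (xs, xs) (0, 1)), map_add, map_smul, smul_eq_mul] at h
    rw [ef₂, efy]; linarith [h]
  -- scalar second-order equations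
  have e3 : f₁₁ + 2 * fderiv ℝ Y (xs, xs) (1, 0) * f₁y +
      fderiv ℝ Y (xs, xs) (1, 0) * fderiv ℝ Y (xs, xs) (1, 0) * H (0, 0, 1) (0, 0, 1) +
      K (1, 0) (1, 0) * fy = 0 := by
    have h := E3
    rw [hvec1 (fderiv ℝ Y (xs, xs) (1, 0)), hvec3 (K (1, 0) (1, 0))] at h
    simp only [map_add, map_smul, ContinuousLinearMap.add_apply,
      ContinuousLinearMap.smul_apply, smul_eq_mul] at h
    have hs1 : H (0, 0, 1) (1, 0, 0) = H (1, 0, 0) (0, 0, 1) := hsymm _ _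
    rw [ef₁₁, ef₁y, efy]
    linear_combination h - fderiv ℝ Y (xs, xs) (1, 0) * hs1
  have e4 : f₂₂ + 2 * fderiv ℝ Y (xs, xs) (0, 1) * f₂y +
      fderiv ℝ Y (xs, xs) (0, 1) * fderiv ℝ Y (xs, xs) (0, 1) * H (0, 0, 1) (0, 0, 1) +
      K (0, 1) (0, 1) * fy = 0 := by
    have h := E4
    rw [hvec2 (fderiv ℝ Y (xs, xs) (0, 1)), hvec3 (K (0, 1) (0, 1))] at h
    simp only [map_add, map_smul, ContinuousLinearMap.add_apply,
      ContinuousLinearMap.smul_apply, smul_eq_mul] at h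
    have hs2 : H (0, 0, 1) (0, 1, 0) = H (0, 1, 0) (0, 0, 1) := hsymm _ _
    rw [ef₂₂, ef₂y, efy]
    linear_combination h - fderiv ℝ Y (xs, xs) (0, 1) * hs2
  -- reduce to scalar algebra
  rw [eY11, eY22]
  set U := (fderiv ℝ Y (xs, xs)) (1, 0) with hUdef
  set V := (fderiv ℝ Y (xs, xs)) (0, 1) with hVdef
  set A := (H (0, 0, 1)) (0, 0, 1) with hAdef
  set K11 := (K (1, 0)) (1, 0) with hK11def
  set K22 := (K (0, 1)) (0, 1) with hK22def
  clear_value U V A K11 K22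
  clear eY11 eY22 E3 E4 hmain1 hmain2 hu' hv' curveK1 curveK2 hu hv ef₁₁ ef₂₂ ef₁y ef₂y
  clear curveH curveH2 ef₁ ef₂ efy hx1 hx2 hx3 hsymm hH hK hf' hY' hFc hGc hzero
  clear hf hY hf₁ hf₂ hfy hf₁₁ hf₂₂ hf₁y hf₂y hvec1 hvec2 hvec3
  -- equal slopes from the fold condition
  have hUV : U = V := by
    have h : (U - V) * fy = 0 := by linear_combination e1 - e2 - hfold
    rcases mul_eq_zero.mp h with h' | h'
    · linarith [sub_eq_zero.mp h']
    · exact absurd h' hfy0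
  have hU : U * fy = -f₁ := by linarith [e1]
  -- main identity
  have key : K11 - K22 = -Dstar / fy := by
    rw [hD, eq_div_iff hfy0]
    rw [← hUV] at e4
    have keymul : (K11 - K22) * fy = -(f₁₁ - f₂₂) - 2 * U * (f₁y - f₂y) := by
      linear_combination e3 - e4
    have h2 : 2 * U * (f₁y - f₂y) * fy = -(2 * f₁ * (f₁y - f₂y)) := by
      linear_combination 2 * (f₁y - f₂y) * hU
    field_simp
    linear_combination fy * keymul - h2
  refine ⟨key, ?_⟩
  constructor
  · intro hne hD0
    apply hne
    have h0 : K11 - K22 = 0 := by rw [key, hD0]; simp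
    linarith
  · intro hD0 heq
    apply hD0
    have h0 : -Dstar / fy = 0 := by rw [← key, heq]; ring
    rcases div_eq_zero_iff.mp h0 with h | h
    · linarith [neg_eq_zero.mp h]
    · exact absurd h hfy0
end
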